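/- Let $a_2 > a_1 \ge 0$ and $0 < \alpha < \beta$. For $t, x > 0$ satisfying $\sqrt{(a_2+\beta)/\beta} \le t/x \le \sqrt{(a_2+\alpha)/\alpha}$, the quantity $|H| = \sqrt{2\pi}\, a_2^{3/4}\, h_1(t,x)\, |h_2(t,x)|$, with $h_1(t,x) = ((t/x)^2/((t/x)^2 - 1))^{3/4}$ and $h_2(t,x) = \sqrt{w}/(\sqrt{w}+\sqrt{a_2})^2$ where $w = (a_2 - a_1)((t/x)^2 - 1) + a_2$, satisfies $|H| \le \sqrt{2\pi}\,\sqrt{\beta}\,(a_2+\beta)^{3/4}/(\sqrt{a_2}\sqrt{a_2 - a_1 + \beta})$. -/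

import Mathlib

/-!
With `s = (t/x)^2`, the lower bound on `t/x` says `β (s - 1) ≥ a₂`. This gives
`a₂ · s/(s - 1) ≤ a₂ + β` for the first factor and `w ≥ a₂ (a₂ - a₁ + β)/β` for the second;
the latter is then bounded by `√w/(√w + √a₂)² ≤ 1/√w`.
-/

open Real

lemma one_lt_of_add_div_le {a b s : ℝ} (ha : 0 < a) (hb : 0 < b) (hs : (a + b) / b ≤ s) :
    1 < s :=
  calc 1 < (a + b) / b := by rw [one_lt_div hb]; linarith
    _ ≤ s := hs

lemma mul_div_sub_one_le_add {a b s : ℝ} (ha : 0 < a) (hb : 0 < b) (hs : (a + b) / b ≤ s) :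
    a * (s / (s - 1)) ≤ a + b := by
  have hs1 : 0 < s - 1 := sub_pos.2 (one_lt_of_add_div_le ha hb hs)
  have hbs : a + b ≤ b * s := (div_le_iff₀' hb).1 hs
  rw [mul_div_assoc', div_le_iff₀ hs1]
  nlinarith

lemma rpow_mul_rpow_div_sub_one_le {a b s p : ℝ} (ha : 0 < a) (hb : 0 < b)
    (hs : (a + b) / b ≤ s) (hp : 0 ≤ p) :
    a ^ p * (s / (s - 1)) ^ p ≤ (a + b) ^ p := by
  have hs1 : 1 < s := one_lt_of_add_div_le ha hb hs
  rw [← mul_rpow ha.le (div_nonneg (by linarith) (by linarith))]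
  exact rpow_le_rpow (by positivity) (mul_div_sub_one_le_add ha hb hs) hp

lemma div_sq_add_le_inv {u v : ℝ} (hu : 0 ≤ u) (hv : 0 ≤ v) : u / (u + v) ^ 2 ≤ u⁻¹ := by
  rcases hu.eq_or_lt with rfl | hu
  · simp
  rw [div_le_iff₀ (by positivity), inv_mul_eq_div, le_div_iff₀ hu]
  nlinarith

lemma mul_add_div_le_of_add_div_le {a b d s : ℝ} (hb : 0 < b) (hd : 0 ≤ d)
    (hs : (a + b) / b ≤ s) : a * (d + b) / b ≤ d * (s - 1) + a := by
  have has : a / b ≤ s - 1 := by rw [add_div, div_self hb.ne'] at hs; linarith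
  calc a * (d + b) / b = d * (a / b) + a := by field_simp
    _ ≤ d * (s - 1) + a := by gcongr

lemma sqrt_div_sq_add_sqrt_le {a b d s : ℝ} (ha : 0 < a) (hb : 0 < b) (hd : 0 ≤ d)
    (hs : (a + b) / b ≤ s) :
    √(d * (s - 1) + a) / (√(d * (s - 1) + a) + √a) ^ 2 ≤ √b / (√a * √(d + b)) :=
  calc √(d * (s - 1) + a) / (√(d * (s - 1) + a) + √a) ^ 2 ≤ (√(d * (s - 1) + a))⁻¹ :=
        div_sq_add_le_inv (sqrt_nonneg _) (sqrt_nonneg _)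
    _ ≤ (√(a * (d + b) / b))⁻¹ :=
        inv_anti₀ (sqrt_pos.2 (by positivity))
          (sqrt_le_sqrt (mul_add_div_le_of_add_div_le hb hd hs))
    _ = √b / (√a * √(d + b)) := by
        rw [sqrt_div (by positivity), sqrt_mul ha.le, inv_div]

theorem stmt_14 (a1 a2 α β : ℝ) (ha1 : 0 ≤ a1) (ha2 : a1 < a2)
    (hα : 0 < α) (hαβ : α < β) :
    ∀ t x : ℝ, 0 < t → 0 < x →
      Real.sqrt ((a2 + β) / β) ≤ t / x → t / x ≤ Real.sqrt ((a2 + α) / α) →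
      Real.sqrt (2 * π) * a2 ^ ((3 : ℝ) / 4) *
          ((t / x) ^ 2 / ((t / x) ^ 2 - 1)) ^ ((3 : ℝ) / 4) *
          |Real.sqrt ((a2 - a1) * ((t / x) ^ 2 - 1) + a2) /
            (Real.sqrt ((a2 - a1) * ((t / x) ^ 2 - 1) + a2) + Real.sqrt a2) ^ 2| ≤
        Real.sqrt (2 * π) * Real.sqrt β * (a2 + β) ^ ((3 : ℝ) / 4) /
          (Real.sqrt a2 * Real.sqrt (a2 - a1 + β)) := by
  intro t x _ _ hlower _
  have hβ : 0 < β := hα.trans hαβ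
  have ha2_pos : 0 < a2 := ha1.trans_lt ha2
  have hs : (a2 + β) / β ≤ (t / x) ^ 2 := (sqrt_le_iff.1 hlower).2
  rw [abs_of_nonneg (by positivity)]
  calc √(2 * π) * a2 ^ ((3 : ℝ) / 4) * ((t / x) ^ 2 / ((t / x) ^ 2 - 1)) ^ ((3 : ℝ) / 4) *
        (√((a2 - a1) * ((t / x) ^ 2 - 1) + a2) /
          (√((a2 - a1) * ((t / x) ^ 2 - 1) + a2) + √a2) ^ 2)
      ≤ √(2 * π) * (a2 + β) ^ ((3 : ℝ) / 4) * (√β / (√a2 * √(a2 - a1 + β))) := by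
        rw [mul_assoc √(2 * π)]
        gcongr √(2 * π) * ?_ * ?_
        · exact rpow_mul_rpow_div_sub_one_le ha2_pos hβ hs (by norm_num)
        · exact sqrt_div_sq_add_sqrt_le ha2_pos hβ (sub_nonneg.2 ha2.le) hs
    _ = √(2 * π) * √β * (a2 + β) ^ ((3 : ℝ) / 4) / (√a2 * √(a2 - a1 + β)) := by ring
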